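/- Let X be a real Banach space and let (A_n) be a boundedly compact approximation scheme in X, i.e., for every n the set {a ∈ A_n : ‖a‖ ≤ 1} is relatively compact in X. Then every infinite dimensional closed linear subspace Y of X satisfies Shapiro's Theorem relative to (A_n): for every nonincreasing sequence of nonnegative reals ε_n → 0 there exists y ∈ Y such that there is no constant C with E(y, A_n) ≤ C ε_n for all n. -/

import Mathlib

open Metric Filter Pointwise

/-- `(A, K)` is an approximation scheme on `X`: the sets `A n` form a strictly increasing
chain, `A n + A n ⊆ A (K n)` with `K n ≥ n`, each `A n` is closed under scalar
multiplication, and `⋃ n, A n` is dense in `X`. -/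
def IsApproximationScheme {X : Type*} [NormedAddCommGroup X] [NormedSpace ℝ X]
    (A : ℕ → Set X) (K : ℕ → ℕ) : Prop :=
  (∀ n, A n ⊂ A (n + 1)) ∧
  (∀ n, n ≤ K n ∧ A n + A n ⊆ A (K n)) ∧
  (∀ (n : ℕ) (c : ℝ), c • A n ⊆ A n) ∧
  Dense (⋃ n, A n)

/-- Admissible error sequences: nonnegative, nonincreasing, tending to `0`. -/
def NullSeq (ε : ℕ → ℝ) : Prop :=
  (∀ n, 0 ≤ ε n) ∧ Antitone ε ∧ Tendsto ε atTop (nhds 0)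


/-! If every `y ∈ Y` had `E(y, A n) = O(ε n)`, Baire's theorem applied in the complete space `Y`
to the closed sets `{y | ∀ n, E(y, A n) ≤ C * ε n}` would give a ball `ball y₀ ρ` of `Y` on which
this bound holds with a single `C`. As `A n - A n ⊆ A (K n)`, comparing `y₀ + w` with `y₀` then
gives `E(w, A (K n)) ≤ 2 C ε n` for every `w ∈ Y` with `‖w‖ < ρ`. But `A (K n)` is a cone with
relatively compact bounded part, so a Riesz-type argument yields unit vectors of the
infinite-dimensional `Y` at distance at least `1/12` from it, which is incompatible with
`ε n → 0`. -/

theorem IsCompact.not_pairwise_le_dist {α : Type*} [PseudoMetricSpace α] {S : Set α}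
    (hS : IsCompact S) {f : ℕ → α} (hf : ∀ n, f n ∈ S) {δ : ℝ} (hδ : 0 < δ) :
    ¬ Pairwise fun m n => δ ≤ dist (f m) (f n) := by
  intro hsep
  obtain ⟨x, -, φ, hφ, hlim⟩ := hS.tendsto_subseq hf
  obtain ⟨N, hN⟩ := Metric.cauchySeq_iff'.1 hlim.cauchySeq δ hδ
  exact (hN (N + 1) N.le_succ).not_ge (@hsep (φ (N + 1)) (φ N) (hφ.injective.ne N.succ_ne_self))

theorem infDist_sub_le_of_sub_subset {E : Type*} [SeminormedAddCommGroup E] {s t u : Set E}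
    (hs : s.Nonempty) (ht : t.Nonempty) (h : s - t ⊆ u) (x y : E) :
    infDist (x - y) u ≤ infDist x s + infDist y t := by
  have key : ∀ a ∈ s, ∀ b ∈ t, infDist (x - y) u ≤ dist x a + dist y b := fun a ha b hb =>
    (infDist_le_dist_of_mem (h (Set.sub_mem_sub ha hb))).trans (dist_sub_sub_le _ _ _ _)
  have : infDist (x - y) u - infDist x s ≤ infDist y t :=
    (le_infDist ht).2 fun b hb => sub_le_comm.1 <|
      (le_infDist hs).2 fun a ha => by linarith [key a ha b hb]
  linarith

section Cone

variable {𝕜 E : Type*} [NormedField 𝕜] [SeminormedAddCommGroup E] [NormedSpace 𝕜 E] {M : Set E}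

theorem smul_set_eq_of_forall_smul_set_subset (hM : ∀ c : 𝕜, c • M ⊆ M) {c : 𝕜} (hc : c ≠ 0) :
    c • M = M :=
  (hM c).antisymm fun x hx =>
    (Set.mem_smul_set_iff_inv_smul_mem₀ hc M x).2 (hM c⁻¹ (Set.smul_mem_smul_set hx))

theorem infDist_smul_of_forall_smul_set_subset (hM : ∀ c : 𝕜, c • M ⊆ M) (c : 𝕜) (x : E) :
    infDist (c • x) M = ‖c‖ * infDist x M := by
  rcases eq_or_ne c 0 with rfl | hc
  · rcases M.eq_empty_or_nonempty with rfl | ⟨a, ha⟩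
    · simp
    · simpa using infDist_zero_of_mem (hM 0 (Set.smul_mem_smul_set ha))
  · conv_lhs => rw [← smul_set_eq_of_forall_smul_set_subset hM hc]
    exact infDist_smul₀ hc M x

end Cone

theorem exists_mem_norm_eq_one_le_infDist_of_isCompact {E : Type*} [NormedAddCommGroup E]
    [NormedSpace ℝ E] {M : Set E} (hM : ∀ c : ℝ, c • M ⊆ M) (hne : M.Nonempty)
    (hcpt : IsCompact (closure {a ∈ M | ‖a‖ ≤ 1})) {Y : Submodule ℝ E}
    (hY : ¬ FiniteDimensional ℝ Y) : ∃ y ∈ Y, ‖y‖ = 1 ∧ 1 / 12 ≤ infDist y M := by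
  obtain ⟨f, hf3, hsep⟩ := exists_seq_norm_le_one_le_norm_sub' (c := (2 : ℝ)) (R := 3)
    (by norm_num) (by norm_num) hY
  -- Points of `M` within `1/4` of the `f n` would be `1/2`-separated and bounded by `4`.
  obtain ⟨n, hn⟩ : ∃ n, 1 / 4 ≤ infDist (f n : E) M := by
    by_contra! hnear
    choose a haM ha using fun n => (infDist_lt_iff hne).1 (hnear n)
    refine hcpt.not_pairwise_le_dist (f := fun n => (4 : ℝ)⁻¹ • a n) (fun n => subset_closure
      ⟨hM _ (Set.smul_mem_smul_set (haM n)), ?_⟩) (δ := 1 / 8) (by norm_num) fun m n hmn => ?_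
    · have := norm_le_insert' (a n) (f n : E)
      have hf : ‖(f n : E)‖ ≤ 3 := hf3 n
      rw [norm_sub_rev, ← dist_eq_norm] at this
      rw [norm_smul, norm_inv, Real.norm_ofNat]
      linarith [ha n]
    · have hfmn : 1 ≤ dist (f m : E) (f n) := (hsep hmn).trans_eq (dist_eq_norm _ _).symm
      have := dist_triangle4 (f m : E) (a m) (a n) (f n)
      show 1 / 8 ≤ dist _ _
      rw [dist_smul₀, norm_inv, Real.norm_ofNat]
      rw [dist_comm (a n)] at this
      linarith [ha m, ha n]
  have hfn : (f n : E) ≠ 0 := by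
    intro h0
    rw [h0, ← zero_smul ℝ (0 : E), infDist_smul_of_forall_smul_set_subset hM, norm_zero,
      zero_mul] at hn
    norm_num at hn
  refine ⟨‖(f n : E)‖⁻¹ • (f n : E), Y.smul_mem _ (f n).2, norm_smul_inv_norm hfn, ?_⟩
  rw [infDist_smul_of_forall_smul_set_subset hM, norm_inv, norm_norm]
  calc (1 : ℝ) / 12 = 3⁻¹ * (1 / 4) := by norm_num
    _ ≤ ‖(f n : E)‖⁻¹ * infDist (f n : E) M :=
      mul_le_mul (inv_anti₀ (norm_pos_iff.2 hfn) (hf3 n)) hn (by norm_num) (by positivity)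

theorem exists_ball_forall_le_mul_of_forall_exists_le_mul {Z : Type*} [MetricSpace Z]
    [CompleteSpace Z] [Nonempty Z] {g : ℕ → Z → ℝ} (hg : ∀ n, Continuous (g n)) {ε : ℕ → ℝ}
    (hε : ∀ n, 0 ≤ ε n) (h : ∀ z, ∃ C, ∀ n, g n z ≤ C * ε n) :
    ∃ z₀, ∃ ρ > 0, ∃ C, ∀ z ∈ ball z₀ ρ, ∀ n, g n z ≤ C * ε n := by
  set S : ℕ → Set Z := fun C => ⋂ n, {z | g n z ≤ C * ε n}
  have hS : ∀ C, IsClosed (S C) := fun C =>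
    isClosed_iInter fun n => isClosed_le (hg n) continuous_const
  have hcover : ⋃ C, S C = Set.univ := by
    refine Set.eq_univ_of_forall fun z => ?_
    obtain ⟨C, hC⟩ := h z
    exact Set.mem_iUnion.2 ⟨⌈C⌉₊, Set.mem_iInter.2 fun n =>
      (hC n).trans (mul_le_mul_of_nonneg_right (Nat.le_ceil C) (hε n))⟩
  obtain ⟨C, z₀, hz₀⟩ := nonempty_interior_of_iUnion_of_closed hS hcover
  obtain ⟨ρ, hρ, hball⟩ := Metric.isOpen_iff.1 isOpen_interior z₀ hz₀
  exact ⟨z₀, ρ, hρ, C, fun z hz => Set.mem_iInter.1 (interior_subset (hball hz))⟩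

namespace IsApproximationScheme

variable {X : Type*} [NormedAddCommGroup X] [NormedSpace ℝ X] {A : ℕ → Set X} {K : ℕ → ℕ}

theorem nonempty_succ (hA : IsApproximationScheme A K) (n : ℕ) : (A (n + 1)).Nonempty :=
  let ⟨x, hx, _⟩ := Set.exists_of_ssubset (hA.1 n)
  ⟨x, hx⟩

theorem sub_subset (hA : IsApproximationScheme A K) (n : ℕ) : A n - A n ⊆ A (K n) := by
  rintro _ ⟨a, ha, b, hb, rfl⟩
  show a - b ∈ _
  rw [sub_eq_add_neg]
  refine (hA.2.1 n).2 (Set.add_mem_add ha ?_)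
  simpa using hA.2.2.1 n (-1) (Set.smul_mem_smul_set hb)

end IsApproximationScheme

theorem boundedly_compact_shapiro
    {X : Type*} [NormedAddCommGroup X] [NormedSpace ℝ X] [CompleteSpace X]
    (A : ℕ → Set X) (K : ℕ → ℕ) (hA : IsApproximationScheme A K)
    (hcpt : ∀ n : ℕ, IsCompact (closure {a ∈ A n | ‖a‖ ≤ 1}))
    (Y : Submodule ℝ X) (hYc : IsClosed (Y : Set X)) (hY : ¬ FiniteDimensional ℝ Y) :
    ∀ ε : ℕ → ℝ, NullSeq ε →
      ∃ y ∈ Y, ¬ ∃ C : ℝ, ∀ n : ℕ, infDist y (A n) ≤ C * ε n := by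
  rintro ε ⟨hε0, -, hεlim⟩
  by_contra! hbound
  have : CompleteSpace Y := hYc.completeSpace_coe
  obtain ⟨y₀, ρ, hρ, C, hball⟩ := exists_ball_forall_le_mul_of_forall_exists_le_mul
    (g := fun n (y : Y) => infDist (y : X) (A n))
    (fun n => (continuous_infDist_pt _).comp continuous_subtype_val) hε0 fun y => hbound y y.2
  have hnear : ∀ m, ∀ w ∈ Y, ‖w‖ < ρ → infDist w (A (K (m + 1))) ≤ 2 * C * ε (m + 1) := by
    intro m w hw hwρ
    have hw₀ : y₀ + ⟨w, hw⟩ ∈ ball y₀ ρ := by simpa [dist_self_add_left] using hwρ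
    have h₁ : infDist (y₀ + w) (A (m + 1)) ≤ C * ε (m + 1) := hball _ hw₀ (m + 1)
    have := infDist_sub_le_of_sub_subset (hA.nonempty_succ m) (hA.nonempty_succ m)
      (hA.sub_subset (m + 1)) (y₀ + w) y₀
    rw [add_sub_cancel_left] at this
    linarith [hball y₀ (mem_ball_self hρ) (m + 1)]
  have hfar : ∀ m, ρ / 24 ≤ 2 * C * ε (m + 1) := by
    intro m
    have hcone := hA.2.2.1 (K (m + 1))
    obtain ⟨z, hzY, hz1, hz⟩ := exists_mem_norm_eq_one_le_infDist_of_isCompact hcone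
      (((hA.nonempty_succ m).sub (hA.nonempty_succ m)).mono (hA.sub_subset _)) (hcpt _) hY
    have hρz : ‖(ρ / 2) • z‖ < ρ := by
      rw [norm_smul, hz1, mul_one, Real.norm_of_nonneg (half_pos hρ).le]
      exact half_lt_self hρ
    have := hnear m ((ρ / 2) • z) (Y.smul_mem _ hzY) hρz
    rw [infDist_smul_of_forall_smul_set_subset hcone, Real.norm_of_nonneg (half_pos hρ).le] at this
    linarith [mul_le_mul_of_nonneg_left hz (half_pos hρ).le]
  obtain ⟨m, hm⟩ := (((hεlim.comp (tendsto_add_atTop_nat 1)).const_mul (2 * C)).eventually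
    (gt_mem_nhds (by rw [mul_zero]; positivity : 2 * C * 0 < ρ / 24))).exists
  exact (hfar m).not_gt hm
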